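/- Let θ₀ ∈ (0,1], μ > 0, α ∈ (0,1), and let (θ_k) be the sequence defined by θ_{k+1} = (√(θ_k⁴ + 4θ_k²) − θ_k²)/2. If k ≥ (2/θ₀)·(√((1+μ)/(αμ)) − 1) + 1, then θ_{k−1}²·((1−θ₀)/θ₀² + 1/(θ₀²μ)) ≤ α. -/

import Mathlib

/-!
Writing `θ' = thetaStep θ`, the recursion says that `θ'` is the positive root of
`x² + θ² x - θ² = 0`, i.e. `(1/θ')² - 1/θ' = (1/θ)²`. Completing the square gives
`1/θ' ≥ 1/θ + 1/2`, so `1/θ_n ≥ 1/θ₀ + n/2`. For `k` above the threshold this makes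
`θ_{k-1} ≤ θ₀ / √((1+μ)/(αμ))`, and the constant `(1-θ₀)/θ₀² + 1/(θ₀²μ)` is at most
`(1+μ)/(θ₀²μ)`.
-/

open Real

noncomputable def thetaStep (θ : ℝ) : ℝ := (√(θ ^ 4 + 4 * θ ^ 2) - θ ^ 2) / 2

lemma thetaStep_sq (θ : ℝ) : thetaStep θ ^ 2 = θ ^ 2 * (1 - thetaStep θ) := by
  have h := sq_sqrt (by positivity : 0 ≤ θ ^ 4 + 4 * θ ^ 2)
  unfold thetaStep
  linear_combination h / 4

lemma thetaStep_pos {θ : ℝ} (hθ : 0 < θ) : 0 < thetaStep θ := by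
  have : θ ^ 2 < √(θ ^ 4 + 4 * θ ^ 2) :=
    lt_sqrt_of_sq_lt (by nlinarith [pow_pos hθ 2])
  unfold thetaStep
  linarith

lemma add_half_le_of_sq_eq_sq_add {a b : ℝ} (ha : 0 < a) (h : a ^ 2 = b ^ 2 + a) :
    b + 1 / 2 ≤ a := by
  nlinarith [sq_nonneg (a - b), sq_nonneg b]

lemma inv_add_half_le_inv_thetaStep {θ : ℝ} (hθ : 0 < θ) :
    θ⁻¹ + 1 / 2 ≤ (thetaStep θ)⁻¹ := by
  have hθ' := thetaStep_pos hθ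
  refine add_half_le_of_sq_eq_sq_add (inv_pos.2 hθ') ?_
  field_simp
  linear_combination -thetaStep_sq θ

lemma inv_add_half_mul_le_inv_of_thetaStep {th : ℕ → ℝ} (h0 : 0 < th 0)
    (hrec : ∀ n, th (n + 1) = thetaStep (th n)) (n : ℕ) :
    0 < th n ∧ (th 0)⁻¹ + n / 2 ≤ (th n)⁻¹ := by
  induction n with
  | zero => simpa using h0
  | succ n ih =>
    rw [hrec n]
    refine ⟨thetaStep_pos ih.1, ?_⟩
    have := inv_add_half_le_inv_thetaStep ih.1
    push_cast
    linarith [ih.2]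

lemma sq_mul_le_sq_of_sqrt_div_le_inv {θ t R : ℝ} (hθ : 0 < θ) (ht : 0 < t) (hR : 0 ≤ R)
    (h : √R / t ≤ θ⁻¹) : θ ^ 2 * R ≤ t ^ 2 := by
  have hle : θ * √R ≤ t := by
    rw [div_le_iff₀ ht, ← div_eq_inv_mul, le_div_iff₀ hθ] at h
    linarith
  calc θ ^ 2 * R = (θ * √R) ^ 2 := by rw [mul_pow, sq_sqrt hR]
    _ ≤ t ^ 2 := pow_le_pow_left₀ (by positivity) hle 2

theorem contraction_for_long_enough_period (t0 μ α : ℝ)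
    (ht0 : t0 ∈ Set.Ioc (0:ℝ) 1) (hμ : 0 < μ) (hα : α ∈ Set.Ioo (0:ℝ) 1)
    (th : ℕ → ℝ) (h0 : th 0 = t0)
    (hrec : ∀ k, th (k+1) = (Real.sqrt ((th k)^4 + 4*(th k)^2) - (th k)^2)/2)
    (k : ℕ) (hk1 : 1 ≤ k)
    (hk : (2/t0) * (Real.sqrt ((1+μ)/(α*μ)) - 1) + 1 ≤ (k : ℝ)) :
    (th (k-1))^2 * ((1 - t0)/t0^2 + 1/(t0^2*μ)) ≤ α := by
  have ht : 0 < t0 := ht0.1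
  set R := (1 + μ) / (α * μ)
  obtain ⟨hθ, hinv⟩ := inv_add_half_mul_le_inv_of_thetaStep (h0 ▸ ht) hrec (k - 1)
  rw [h0, Nat.cast_sub hk1, Nat.cast_one] at hinv
  have hthreshold : √R / t0 ≤ (th (k - 1))⁻¹ := by
    have : (2 / t0) * (√R - 1) = 2 * (√R / t0) - 2 * t0⁻¹ := by ring
    linarith
  have hθR := sq_mul_le_sq_of_sqrt_div_le_inv hθ ht
    (by have := hα.1; positivity) hthreshold
  have hconst : (1 - t0) / t0 ^ 2 + 1 / (t0 ^ 2 * μ) ≤ α * R / t0 ^ 2 := by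
    have : α * R / t0 ^ 2 = 1 / t0 ^ 2 + 1 / (t0 ^ 2 * μ) := by
      simp only [R]
      field_simp [hα.1.ne']
      ring
    rw [this]
    gcongr
    linarith
  calc th (k - 1) ^ 2 * ((1 - t0) / t0 ^ 2 + 1 / (t0 ^ 2 * μ))
      ≤ th (k - 1) ^ 2 * (α * R / t0 ^ 2) := by gcongr
    _ = α * (th (k - 1) ^ 2 * R) / t0 ^ 2 := by ring
    _ ≤ α * t0 ^ 2 / t0 ^ 2 := by gcongr; exact hα.1.le
    _ = α := by field_simp
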